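/- arXiv:2009.11849 — 4 statements merged into one kernel-verified Lean document; each statement's English description precedes it below -/
import Mathlib

section
/- For every rooted tree T and every complex symmetric n×n matrix K, one has K ∈ L_T^⊥ if and only if A_T · p(K) = 0 (where p(K) is viewed as a column vector indexed by the 2-element subsets of {0,…,n}). Consequently, for complex symmetric n×n matrices K and W, K − W ∈ L_T^⊥ if and only if A_T · p(K) = A_T · p(W). -/
attribute [local instance] Classical.propDecidable

/-- A rooted tree on leaves `0, …, n`, rooted at the leaf `0`, with all edges directed
away from the root, no vertices of degree two, together with its (uniquely determined)
most-recent-common-ancestor function `lca` on leaf labels.  The parent map `par` sends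
every non-root vertex to the vertex its unique incoming edge comes from, and fixes the
root.  A vertex `u` is a descendant of `v` iff some iterate of `par` sends `u` to `v`. -/
structure PhyloTree where
  n : ℕ
  hn : 1 ≤ n
  V : Type
  fintypeV : Fintype V
  leaf : Fin (n + 1) ↪ V
  par : V → V
  par_root : par (leaf 0) = leaf 0
  par_ne : ∀ v : V, v ≠ leaf 0 → par v ≠ v
  reaches_root : ∀ v : V, ∃ k : ℕ, par^[k] v = leaf 0
  leaf_iff : ∀ v : V, v ≠ leaf 0 → (v ∈ Set.range leaf ↔ ∀ u, par u ≠ v)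
  root_unique_child : ∃! u : V, u ≠ leaf 0 ∧ par u = leaf 0
  no_degree_two : ∀ v : V, v ∉ Set.range leaf → ∃ u w : V, u ≠ w ∧ par u = v ∧ par w = v
  lca : Fin (n + 1) → Fin (n + 1) → V
  lca_anc_left : ∀ i j, ∃ k : ℕ, par^[k] (leaf i) = lca i j
  lca_anc_right : ∀ i j, ∃ k : ℕ, par^[k] (leaf j) = lca i j
  lca_min : ∀ i j (w : V), (∃ k : ℕ, par^[k] (leaf i) = w) →
      (∃ k : ℕ, par^[k] (leaf j) = w) → ∃ k : ℕ, par^[k] (lca i j) = w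

instance (T : PhyloTree) : Fintype T.V := T.fintypeV

/-- `T.isAnc v u` : `v` is an ancestor of `u`, i.e. `u` is a descendant of `v`
(every vertex is a descendant of itself). -/
def PhyloTree.isAnc (T : PhyloTree) (v u : T.V) : Prop := ∃ k : ℕ, T.par^[k] u = v

/-- The 2-element subsets `{i,j}` of `{0, …, n}`, encoded as ordered pairs `i < j`. -/
abbrev PairIdx (n : ℕ) := {q : Fin (n + 1) × Fin (n + 1) // q.1 < q.2}

/-- The non-root vertices of `T`; these index the rows of `A_T`, and are also in
bijection `v ↦ e(v)` with the edges of `T`, so they also index the rows of `B_T`. -/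
abbrev PhyloTree.NR (T : PhyloTree) := {v : T.V // v ≠ T.leaf 0}

/-- The matrix `A_T`, with rows indexed by non-root vertices and columns indexed by
2-element subsets `{i,j}` of `{0, …, n}`: the entry is `1` if `v = i`, `v = j` or
`v = lca(i,j)`, and `0` otherwise. -/
noncomputable def Amat (T : PhyloTree) (R : Type*) [Zero R] [One R] :
    Matrix T.NR (PairIdx T.n) R :=
  Matrix.of fun v s =>
    if v.1 = T.leaf s.1.1 ∨ v.1 = T.leaf s.1.2 ∨ v.1 = T.lca s.1.1 s.1.2 then 1 else 0

/-- `T.onPath v i j` : the edge `e(v)` lies on the unique path between the leaves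
`i` and `j`, i.e. `v` lies strictly below `lca(i,j)` on the segment from `lca(i,j)`
down to `i` or on the segment from `lca(i,j)` down to `j`. -/
def PhyloTree.onPath (T : PhyloTree) (v : T.V) (i j : Fin (T.n + 1)) : Prop :=
  v ≠ T.lca i j ∧ T.isAnc (T.lca i j) v ∧ (T.isAnc v (T.leaf i) ∨ T.isAnc v (T.leaf j))

/-- The matrix `B_T`, with rows indexed by the edges `e(v)` of `T` (equivalently, by the
non-root vertices `v`) and columns indexed by 2-element subsets `{i,j}` of `{0, …, n}`:
the entry is `1` if `e(v) ∈ P(i,j)` and `0` otherwise. -/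
noncomputable def Bmat (T : PhyloTree) (R : Type*) [Zero R] [One R] :
    Matrix T.NR (PairIdx T.n) R :=
  Matrix.of fun v s => if T.onPath v.1 s.1.1 s.1.2 then 1 else 0

/-- The monomial map `φ_M` associated to a nonnegative-integer matrix `M`, sending
`p_c` to `∏_r t_r ^ M(r,c)`. -/
noncomputable def toricMap {R C : Type*} [Fintype R] (M : Matrix R C ℕ) :
    MvPolynomial C ℂ →ₐ[ℂ] MvPolynomial R ℂ :=
  MvPolynomial.aeval fun c => ∏ r : R, MvPolynomial.X r ^ M r c
/-- The linear change of coordinates `p(K)` on symmetric matrices: `p_{ij} = -k_{ij}`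
for `1 ≤ i < j ≤ n` and `p_{0i} = ∑_{j=1}^n k_{ij}`.  Here a symmetric matrix `K` has
rows and columns indexed by the non-root leaves `1, …, n`, i.e. the entry `k_{ij}`
(for `1 ≤ i, j ≤ n`) is `K (i-1) (j-1)`. -/
noncomputable def pvec (T : PhyloTree) (K : Matrix (Fin T.n) (Fin T.n) ℂ) :
    PairIdx T.n → ℂ := fun s =>
  if h : s.1.1 = 0 then
    ∑ k : Fin T.n, K (s.1.2.pred (Fin.pos_iff_ne_zero.mp (lt_of_le_of_lt (Fin.zero_le _) s.2))) k
  else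
    -K (s.1.1.pred h) (s.1.2.pred (Fin.pos_iff_ne_zero.mp (lt_of_le_of_lt (Fin.zero_le _) s.2)))

/-- The linear space `L_T` of complex symmetric `n × n` matrices `Σ = (σ_{ij})`, with rows
and columns indexed by the non-root leaves `1, …, n`, such that `σ_{ij} = σ_{kl}` whenever
`lca(i,j) = lca(k,l)`.  Here row `i : Fin n` corresponds to the leaf label `i.succ`. -/
def Lspace (T : PhyloTree) : Set (Matrix (Fin T.n) (Fin T.n) ℂ) :=
  {S | S.IsSymm ∧ ∀ i j k l : Fin T.n,
      T.lca i.succ j.succ = T.lca k.succ l.succ → S i j = S k l}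

/-- The orthogonal complement `L_T^⊥` of `L_T` inside the space of complex symmetric
`n × n` matrices, with respect to the pairing `⟨A, B⟩ = trace (A * B)`. -/
def LspacePerp (T : PhyloTree) : Set (Matrix (Fin T.n) (Fin T.n) ℂ) :=
  {K | K.IsSymm ∧ ∀ S ∈ Lspace T, (K * S).trace = 0}

open scoped Matrix

/-!
Both conditions are read off the fibres of `lca` on pairs of non-root leaves. `L_T` is spanned
by the indicator matrices of these fibres, so `K ∈ L_T^⊥` iff every fibre sum
`lcaFiberSum K u = ∑_{lca(i,j) = u} k_ij` vanishes. On the other side, the row of `A_T · p(K)`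
at a leaf `i` is `p_0i - ∑_{j ≠ i} k_ij = k_ii = lcaFiberSum K i`, and at an internal vertex `v`
it is `-lcaFiberSum K v / 2`, because `A_T` sees each unordered pair of the fibre once while
`lcaFiberSum` runs over ordered pairs; the fibre of the root is empty. The second statement
follows since `p` is linear.
-/
theorem Fintype.sum_sum_eq_two_nsmul_sum_lt_add_sum_diag {ι M : Type*} [Fintype ι]
    [LinearOrder ι] [DecidableLT ι] [AddCommMonoid M] (F : ι → ι → M)
    (hF : ∀ a b, F a b = F b a) :
    ∑ a, ∑ b, F a b = 2 • ∑ a, ∑ b, (if a < b then F a b else 0) + ∑ a, F a a := by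
  have hsplit : ∀ a b, F a b = ((if a < b then F a b else 0) + if b < a then F b a else 0) +
      if a = b then F a b else 0 := by
    intro a b
    rcases lt_trichotomy a b with h | rfl | h
    · simp [h, h.ne, h.not_gt]
    · simp
    · simp [h, h.ne', h.not_gt, hF a b]
  simp_rw [Finset.sum_congr rfl fun a _ => Finset.sum_congr rfl fun b _ => hsplit a b,
    Finset.sum_add_distrib, Finset.sum_ite_eq, Finset.mem_univ, if_true, two_nsmul]
  rw [Finset.sum_comm (f := fun a b => if b < a then F b a else 0)]

namespace PairIdx

theorem snd_ne_zero {n : ℕ} (s : PairIdx n) : s.1.2 ≠ 0 :=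
  (lt_of_le_of_lt (Fin.zero_le _) s.2).ne'

def sumEquiv (n : ℕ) : Fin n ⊕ {q : Fin n × Fin n // q.1 < q.2} ≃ PairIdx n where
  toFun
    | .inl a => ⟨(0, a.succ), Fin.succ_pos a⟩
    | .inr q => ⟨(q.1.1.succ, q.1.2.succ), Fin.succ_lt_succ_iff.mpr q.2⟩
  invFun s :=
    if h : s.1.1 = 0 then .inl (s.1.2.pred (snd_ne_zero s))
    else .inr ⟨(s.1.1.pred h, s.1.2.pred (snd_ne_zero s)),
      (Fin.pred_lt_pred_iff (ha := h) (hb := snd_ne_zero s)).mpr s.2⟩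
  left_inv
    | .inl a => by simp
    | .inr q => by simp [Fin.succ_ne_zero]
  right_inv s := by
    by_cases h : s.1.1 = 0
    · ext <;> simp [h]
    · ext <;> simp [h]

theorem sum_eq_add_sum_succ_succ {n : ℕ} {M : Type*} [AddCommMonoid M] (g : PairIdx n → M) :
    ∑ s, g s = ∑ a : Fin n, g ⟨(0, a.succ), Fin.succ_pos a⟩ +
      ∑ a : Fin n, ∑ b : Fin n, if h : a < b then
        g ⟨(a.succ, b.succ), Fin.succ_lt_succ_iff.mpr h⟩ else 0 := by
  rw [← (sumEquiv n).sum_comp, Fintype.sum_sum_type, ← Fintype.sum_prod_type',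
    Finset.sum_dite, Finset.sum_const_zero, add_zero]
  exact congrArg _ (Fintype.sum_equiv (Equiv.subtypeEquivRight (by simp)) _ _ fun _ => rfl)

end PairIdx

namespace PhyloTree

variable (T : PhyloTree) {R : Type*}

theorem iterate_par_root (k : ℕ) : T.par^[k] (T.leaf 0) = T.leaf 0 :=
  Function.iterate_fixed T.par_root k

theorem eq_root_of_isPeriodicPt {u : T.V} {p : ℕ} (hp : 0 < p)
    (hu : Function.IsPeriodicPt T.par p u) : u = T.leaf 0 := by
  obtain ⟨d, hd⟩ := T.reaches_root u
  calc u = T.par^[p * d] u := (hu.mul_const d).eq.symm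
    _ = T.par^[p * d - d] (T.par^[d] u) := by
        rw [← Function.iterate_add_apply, Nat.sub_add_cancel (Nat.le_mul_of_pos_left d hp)]
    _ = T.leaf 0 := by rw [hd, iterate_par_root]

theorem isAnc_antisymm {u v : T.V} (huv : T.isAnc u v) (hvu : T.isAnc v u) : u = v := by
  obtain ⟨a, ha⟩ := huv
  obtain ⟨b, hb⟩ := hvu
  rcases Nat.eq_zero_or_pos (a + b) with hab | hab
  · obtain rfl : a = 0 := by omega
    exact ha.symm
  · have hu : Function.IsPeriodicPt T.par (a + b) u := by
      rw [Function.IsPeriodicPt, Function.IsFixedPt, Function.iterate_add_apply, hb, ha]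
    have hroot := T.eq_root_of_isPeriodicPt hab hu
    rw [← hb, hroot, iterate_par_root]

theorem exists_isAnc_of_ne_root : ∃ c ≠ T.leaf 0, ∀ v ≠ T.leaf 0, T.isAnc c v := by
  obtain ⟨c, hc, hc_unique⟩ := T.root_unique_child
  refine ⟨c, hc.1, fun v hv => ?_⟩
  have hreach := T.reaches_root v
  obtain ⟨k, hk⟩ : ∃ k, Nat.find hreach = k + 1 :=
    Nat.exists_eq_succ_of_ne_zero fun h0 => hv (by simpa [h0] using Nat.find_spec hreach)
  refine ⟨k, hc_unique _ ⟨fun hroot => Nat.find_min hreach (by omega) hroot, ?_⟩⟩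
  simpa [hk, Function.iterate_succ_apply'] using Nat.find_spec hreach

theorem lca_comm (i j : Fin (T.n + 1)) : T.lca i j = T.lca j i :=
  T.isAnc_antisymm (T.lca_min j i _ (T.lca_anc_right i j) (T.lca_anc_left i j))
    (T.lca_min i j _ (T.lca_anc_right j i) (T.lca_anc_left j i))

theorem lca_self (i : Fin (T.n + 1)) : T.lca i i = T.leaf i :=
  T.isAnc_antisymm (T.lca_anc_left i i) (T.lca_min i i _ ⟨0, rfl⟩ ⟨0, rfl⟩)

theorem lca_zero_left (j : Fin (T.n + 1)) : T.lca 0 j = T.leaf 0 := by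
  obtain ⟨k, hk⟩ := T.lca_anc_left 0 j
  rw [← hk, iterate_par_root]

theorem eq_leaf_of_isAnc {i : Fin (T.n + 1)} (hi : i ≠ 0) {u : T.V}
    (hu : T.isAnc (T.leaf i) u) : u = T.leaf i := by
  obtain ⟨_ | k, hk⟩ := hu
  · exact hk
  · have hleaf : T.leaf i ≠ T.leaf 0 := T.leaf.injective.ne hi
    rw [Function.iterate_succ_apply'] at hk
    exact absurd hk ((T.leaf_iff _ hleaf).mp ⟨i, rfl⟩ _)

theorem eq_of_lca_eq_leaf {i j m : Fin (T.n + 1)} (hm : m ≠ 0) (h : T.lca i j = T.leaf m) :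
    i = m ∧ j = m :=
  ⟨T.leaf.injective (T.eq_leaf_of_isAnc hm (h ▸ T.lca_anc_left i j)),
    T.leaf.injective (T.eq_leaf_of_isAnc hm (h ▸ T.lca_anc_right i j))⟩

theorem lca_ne_root {i j : Fin (T.n + 1)} (hi : i ≠ 0) (hj : j ≠ 0) :
    T.lca i j ≠ T.leaf 0 := by
  obtain ⟨c, hc, hc_anc⟩ := T.exists_isAnc_of_ne_root
  intro hroot
  obtain ⟨k, hk⟩ := T.lca_min i j c (hc_anc _ (T.leaf.injective.ne hi))
    (hc_anc _ (T.leaf.injective.ne hj))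
  rw [hroot, iterate_par_root] at hk
  exact hc hk.symm

noncomputable def lcaFiberSum [AddCommMonoid R] (K : Matrix (Fin T.n) (Fin T.n) R) (u : T.V) : R :=
  ∑ a, ∑ b, if T.lca a.succ b.succ = u then K a b else 0

theorem lcaFiberSum_root [AddCommMonoid R] (K : Matrix (Fin T.n) (Fin T.n) R) :
    T.lcaFiberSum K (T.leaf 0) = 0 :=
  Finset.sum_eq_zero fun a _ => Finset.sum_eq_zero fun b _ =>
    if_neg (T.lca_ne_root a.succ_ne_zero b.succ_ne_zero)

theorem lcaFiberSum_leaf [AddCommMonoid R] (K : Matrix (Fin T.n) (Fin T.n) R)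
    (m : Fin T.n) : T.lcaFiberSum K (T.leaf m.succ) = K m m := by
  have hfiber : ∀ a b : Fin T.n, T.lca a.succ b.succ = T.leaf m.succ ↔ a = m ∧ b = m := by
    refine fun a b => ⟨fun h => ?_, fun ⟨ha, hb⟩ => by rw [ha, hb, T.lca_self]⟩
    obtain ⟨ha, hb⟩ := T.eq_of_lca_eq_leaf m.succ_ne_zero h
    exact ⟨Fin.succ_injective _ ha, Fin.succ_injective _ hb⟩
  simp [lcaFiberSum, hfiber, ite_and]

theorem trace_mul_of_lca [CommSemiring R] (K : Matrix (Fin T.n) (Fin T.n) R) (σ : T.V → R) :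
    (K * Matrix.of fun i j : Fin T.n => σ (T.lca i.succ j.succ)).trace =
      ∑ u, σ u * T.lcaFiberSum K u := by
  simp only [lcaFiberSum, Finset.mul_sum, mul_ite, mul_zero]
  rw [Finset.sum_comm]
  refine Finset.sum_congr rfl fun a _ => ?_
  rw [Finset.sum_comm]
  simp [Matrix.mul_apply, T.lca_comm, mul_comm]

theorem of_lca_mem_Lspace (σ : T.V → ℂ) :
    Matrix.of (fun i j : Fin T.n => σ (T.lca i.succ j.succ)) ∈ Lspace T :=
  ⟨Matrix.IsSymm.ext fun i j => by simp [T.lca_comm], fun i j k l h => by simp [h]⟩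

theorem exists_eq_of_mem_Lspace {S : Matrix (Fin T.n) (Fin T.n) ℂ} (hS : S ∈ Lspace T) :
    ∃ σ : T.V → ℂ, S = Matrix.of fun i j : Fin T.n => σ (T.lca i.succ j.succ) := by
  have hfactors : Function.FactorsThrough (fun p : Fin T.n × Fin T.n => S p.1 p.2)
      (fun p => T.lca p.1.succ p.2.succ) := fun p q h => hS.2 _ _ _ _ h
  exact ⟨Function.extend _ (fun p : Fin T.n × Fin T.n => S p.1 p.2) 0,
    Matrix.ext fun i j => (hfactors.extend_apply 0 (i, j)).symm⟩

theorem mem_LspacePerp_iff {K : Matrix (Fin T.n) (Fin T.n) ℂ} (hK : K.IsSymm) :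
    K ∈ LspacePerp T ↔ ∀ u, T.lcaFiberSum K u = 0 := by
  refine ⟨fun h u => ?_, fun h => ⟨hK, fun S hS => ?_⟩⟩
  · let σ : T.V → ℂ := fun w => if w = u then 1 else 0
    have h0 := (T.trace_mul_of_lca K σ).symm.trans (h.2 _ (T.of_lca_mem_Lspace σ))
    simpa [σ] using h0
  · obtain ⟨σ, rfl⟩ := T.exists_eq_of_mem_Lspace hS
    rw [trace_mul_of_lca]
    simp [h]

theorem pvec_mk_zero_succ (K : Matrix (Fin T.n) (Fin T.n) ℂ) (a : Fin T.n)
    (h : (0 : Fin (T.n + 1)) < a.succ) : pvec T K ⟨(0, a.succ), h⟩ = ∑ b, K a b := by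
  simp [pvec]

theorem pvec_mk_succ_succ (K : Matrix (Fin T.n) (Fin T.n) ℂ) (a b : Fin T.n)
    (h : a.succ < b.succ) : pvec T K ⟨(a.succ, b.succ), h⟩ = -K a b := by
  simp [pvec, Fin.succ_ne_zero]

theorem pvec_sub (K W : Matrix (Fin T.n) (Fin T.n) ℂ) :
    pvec T (K - W) = pvec T K - pvec T W := by
  funext s
  by_cases h : s.1.1 = 0 <;> simp [pvec, h, Finset.sum_sub_distrib, neg_add_eq_sub]

/-- Only the entries of `G` above the diagonal are prescribed; the rest is chosen in each case
so that the full double sum of `G` is easy to evaluate. -/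
theorem two_mul_mulVec_pvec (K : Matrix (Fin T.n) (Fin T.n) ℂ) (v : T.NR)
    (G : Fin T.n → Fin T.n → ℂ) (hG : ∀ a b, G a b = G b a)
    (hGK : ∀ a b, a < b → G a b = if v.1 = T.leaf a.succ ∨ v.1 = T.leaf b.succ ∨
      v.1 = T.lca a.succ b.succ then K a b else 0) :
    2 * (Amat T ℂ *ᵥ pvec T K) v =
      2 * ∑ a, (if v.1 = T.leaf a.succ then ∑ b, K a b else 0) -
        (∑ a, ∑ b, G a b - ∑ a, G a a) := by
  have hrow : (Amat T ℂ *ᵥ pvec T K) v =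
      ∑ a, (if v.1 = T.leaf a.succ then ∑ b, K a b else 0) -
        ∑ a, ∑ b, if a < b then G a b else 0 := by
    rw [Matrix.mulVec, dotProduct, PairIdx.sum_eq_add_sum_succ_succ]
    simp only [Amat, Matrix.of_apply, ite_mul, one_mul, zero_mul, pvec_mk_zero_succ,
      pvec_mk_succ_succ, lca_zero_left, v.2, false_or, or_false, sub_eq_add_neg,
      ← Finset.sum_neg_distrib]
    refine congrArg _ (Finset.sum_congr rfl fun a _ => Finset.sum_congr rfl fun b _ => ?_)
    by_cases hab : a < b
    · rw [dif_pos hab, if_pos hab, hGK a b hab, apply_ite Neg.neg, neg_zero]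
    · simp [hab]
  rw [hrow, Fintype.sum_sum_eq_two_nsmul_sum_lt_add_sum_diag G hG, two_nsmul]
  ring

theorem mulVec_pvec_of_eq_leaf {K : Matrix (Fin T.n) (Fin T.n) ℂ} (hK : K.IsSymm) (v : T.NR)
    {m : Fin T.n} (hv : v.1 = T.leaf m.succ) : (Amat T ℂ *ᵥ pvec T K) v = K m m := by
  have hleaf : ∀ a : Fin T.n, v.1 = T.leaf a.succ ↔ a = m := by
    simp [hv, T.leaf.injective.eq_iff, eq_comm]
  have hlca : ∀ a b : Fin T.n, v.1 = T.lca a.succ b.succ → a = m := fun a b h =>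
    Fin.succ_injective _ (T.eq_of_lca_eq_leaf m.succ_ne_zero (h.symm.trans hv)).1
  have h2 := T.two_mul_mulVec_pvec K v (fun a b => (if a = m then K a b else 0) +
      if b = m then K a b else 0) (fun a b => by simp [hK.apply a b, add_comm]) fun a b hab => by
    by_cases ha : a = m
    · subst ha; simp [hleaf, hab.ne']
    · have hl : v.1 ≠ T.lca a.succ b.succ := fun h => ha (hlca a b h)
      by_cases hb : b = m <;> simp [hleaf, ha, hb, hl]
  simp only [hleaf, Finset.sum_add_distrib, ← Finset.ite_sum_zero, Finset.sum_ite_eq',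
    Finset.mem_univ, if_true, hK.apply m] at h2
  linear_combination h2 / 2

theorem two_mul_mulVec_pvec_of_not_leaf {K : Matrix (Fin T.n) (Fin T.n) ℂ} (hK : K.IsSymm)
    (v : T.NR) (hv : v.1 ∉ Set.range T.leaf) :
    2 * (Amat T ℂ *ᵥ pvec T K) v = -T.lcaFiberSum K v := by
  have hleaf : ∀ a : Fin T.n, v.1 ≠ T.leaf a.succ := fun a h => hv ⟨a.succ, h.symm⟩
  rw [T.two_mul_mulVec_pvec K v (fun a b => if T.lca a.succ b.succ = v.1 then K a b else 0)
    (fun a b => by simp [hK.apply a b, T.lca_comm]) fun a b _ => by simp [hleaf, eq_comm]]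
  simp [lcaFiberSum, T.lca_self, hleaf, fun a => (hleaf a).symm]

theorem mulVec_pvec_apply_eq_zero_iff {K : Matrix (Fin T.n) (Fin T.n) ℂ} (hK : K.IsSymm)
    (v : T.NR) : (Amat T ℂ *ᵥ pvec T K) v = 0 ↔ T.lcaFiberSum K v = 0 := by
  by_cases hv : v.1 ∈ Set.range T.leaf
  · obtain ⟨i, hi⟩ := hv
    obtain ⟨m, rfl⟩ := Fin.exists_succ_eq.mpr fun h : i = 0 => v.2 (by rw [← hi, h])
    rw [T.mulVec_pvec_of_eq_leaf hK v hi.symm, ← hi, lcaFiberSum_leaf]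
  · rw [← neg_eq_zero (a := T.lcaFiberSum K v), ← T.two_mul_mulVec_pvec_of_not_leaf hK v hv,
      mul_eq_zero, or_iff_right two_ne_zero]

theorem mulVec_pvec_eq_zero_iff {K : Matrix (Fin T.n) (Fin T.n) ℂ} (hK : K.IsSymm) :
    Amat T ℂ *ᵥ pvec T K = 0 ↔ ∀ u, T.lcaFiberSum K u = 0 := by
  simp only [funext_iff, Pi.zero_apply, T.mulVec_pvec_apply_eq_zero_iff hK]
  refine ⟨fun h u => ?_, fun h v => h v⟩
  by_cases hu : u = T.leaf 0
  · rw [hu, lcaFiberSum_root]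
  · exact h ⟨u, hu⟩

theorem mem_LspacePerp_iff_mulVec_pvec_eq_zero {K : Matrix (Fin T.n) (Fin T.n) ℂ}
    (hK : K.IsSymm) : K ∈ LspacePerp T ↔ Amat T ℂ *ᵥ pvec T K = 0 :=
  (T.mem_LspacePerp_iff hK).trans (T.mulVec_pvec_eq_zero_iff hK).symm

end PhyloTree

/-- For every rooted tree `T` and every complex symmetric `n × n` matrix `K`, one has
`K ∈ L_T^⊥` iff `A_T · p(K) = 0`; consequently, for complex symmetric matrices `K` and
`W`, `K - W ∈ L_T^⊥` iff `A_T · p(K) = A_T · p(W)`. -/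
theorem statement1 (T : PhyloTree) (K : Matrix (Fin T.n) (Fin T.n) ℂ) (hK : K.IsSymm) :
    (K ∈ LspacePerp T ↔ Amat T ℂ *ᵥ pvec T K = 0) ∧
    (∀ W : Matrix (Fin T.n) (Fin T.n) ℂ, W.IsSymm →
      (K - W ∈ LspacePerp T ↔ Amat T ℂ *ᵥ pvec T K = Amat T ℂ *ᵥ pvec T W)) := by
  refine ⟨T.mem_LspacePerp_iff_mulVec_pvec_eq_zero hK, fun W hW => ?_⟩
  rw [T.mem_LspacePerp_iff_mulVec_pvec_eq_zero (hK.sub hW), T.pvec_sub, Matrix.mulVec_sub,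
    sub_eq_zero]
end

section
/- Let n ≥ 1 and let p_ij ∈ ℂ be given for all 2-element subsets {i,j} of {0,1,…,n} (so p_ji = p_ij). Assume: (a) p_ij·p_kl = p_ik·p_jl for all pairwise distinct i,j,k,l ∈ {0,…,n}; (b) Σ_{j ∈ {0,…,n}, j ≠ i} p_ij = 0 for every i ∈ {1,…,n}; and (c) Σ_{1 ≤ i < j ≤ n} p_ij = 0. Then p_ij = 0 for all {i,j}. (Equivalently, the varieties L_{S_n}^⊥ and L_{S_n}^{-1} associated to the Brownian motion star tree model intersect only at the zero matrix.) -/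
private lemma star_row_zero (n : ℕ) (p : Fin (n + 1) → Fin (n + 1) → ℂ)
    (hsymm : ∀ i j, p i j = p j i)
    (hb : ∀ i : Fin (n + 1), i ≠ 0 → ∑ j ∈ Finset.univ.erase i, p i j = 0)
    (hc : ∑ q ∈ Finset.univ.filter
        (fun q : Fin (n + 1) × Fin (n + 1) => q.1 ≠ 0 ∧ q.1 < q.2), p q.1 q.2 = 0) :
    ∀ i : Fin (n+1), ∑ j ∈ Finset.univ.erase i, p i j = 0 := by
  intro i
  by_cases hi : i = 0
  · subst hi
    have key1 : ∑ i : Fin (n+1), ∑ j : Fin (n+1),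
        (if i ≠ 0 ∧ j ≠ 0 ∧ i < j then p i j else 0) = 0 := by
      rw [Finset.sum_filter, Fintype.sum_prod_type] at hc
      rw [← hc]
      refine Finset.sum_congr rfl fun a _ => Finset.sum_congr rfl fun b _ => ?_
      congr 1
      simp only [eq_iff_iff]
      constructor
      · rintro ⟨h1, _, h3⟩; exact ⟨h1, h3⟩
      · rintro ⟨h1, h3⟩
        refine ⟨h1, ?_, h3⟩
        rintro rfl
        exact absurd h3 (by simp [Fin.lt_iff_val_lt_val])
    have key2 : ∑ i : Fin (n+1), ∑ j : Fin (n+1),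
        (if i ≠ 0 ∧ j ≠ 0 ∧ j < i then p i j else 0) = 0 := by
      refine Eq.trans ?_ key1
      rw [Finset.sum_comm]
      refine Finset.sum_congr rfl fun a _ => Finset.sum_congr rfl fun b _ => ?_
      by_cases h : a ≠ 0 ∧ b ≠ 0 ∧ a < b
      · rw [if_pos ⟨h.2.1, h.1, h.2.2⟩, if_pos h, hsymm]
      · rw [if_neg (by tauto), if_neg h]
    have keyD : ∑ i : Fin (n+1), ∑ j : Fin (n+1),
        (if i ≠ 0 ∧ j ≠ 0 ∧ j ≠ i then p i j else 0) = 0 := by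
      have hpt : ∀ a b : Fin (n+1), (if a ≠ 0 ∧ b ≠ 0 ∧ b ≠ a then p a b else 0)
          = (if a ≠ 0 ∧ b ≠ 0 ∧ a < b then p a b else 0)
            + (if a ≠ 0 ∧ b ≠ 0 ∧ b < a then p a b else 0) := by
        intro a b
        by_cases hab : a ≠ 0 ∧ b ≠ 0
        · rcases lt_trichotomy a b with h | h | h
          · rw [if_pos ⟨hab.1, hab.2, h.ne'⟩, if_pos ⟨hab.1, hab.2, h⟩,
                if_neg (by rintro ⟨-, -, h'⟩; exact absurd h' (asymm h)), add_zero]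
          · subst h
            simp
          · rw [if_pos ⟨hab.1, hab.2, h.ne⟩,
                if_neg (by rintro ⟨-, -, h'⟩; exact absurd h' (asymm h)),
                if_pos ⟨hab.1, hab.2, h⟩, zero_add]
        · rw [if_neg (by rintro ⟨h1, h2, -⟩; exact hab ⟨h1, h2⟩),
              if_neg (by rintro ⟨h1, h2, -⟩; exact hab ⟨h1, h2⟩),
              if_neg (by rintro ⟨h1, h2, -⟩; exact hab ⟨h1, h2⟩), add_zero]
      simp_rw [hpt, Finset.sum_add_distrib, key1, key2, add_zero]
    -- convert keyD to erase form
    have keyE : ∑ i ∈ Finset.univ.erase (0 : Fin (n+1)),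
        ∑ j ∈ (Finset.univ.erase i).erase 0, p i j = 0 := by
      rw [← keyD]
      rw [← Finset.filter_ne' Finset.univ (0 : Fin (n+1)), Finset.sum_filter]
      refine Finset.sum_congr rfl fun a _ => ?_
      by_cases ha : a ≠ 0
      · rw [if_pos ha]
        have hset : (Finset.univ.erase a).erase (0 : Fin (n+1))
            = Finset.univ.filter (fun j => ¬j = 0 ∧ ¬j = a) := by
          ext j; simp [Finset.mem_erase, and_comm]
        rw [hset, Finset.sum_filter]
        refine Finset.sum_congr rfl fun b _ => ?_
        congr 1
        simp [ha, and_assoc]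
      · rw [if_neg ha]
        push_neg at ha
        subst ha
        refine (Finset.sum_eq_zero fun b _ => ?_).symm
        rw [if_neg (by tauto)]
    -- now conclude
    have hcol : ∑ i ∈ Finset.univ.erase (0 : Fin (n+1)), p i 0 = 0 := by
      have hpt : ∀ i ∈ Finset.univ.erase (0 : Fin (n+1)),
          p i 0 = - ∑ j ∈ (Finset.univ.erase i).erase 0, p i j := by
        intro i hi
        have h0mem : (0 : Fin (n+1)) ∈ Finset.univ.erase i := by
          simp [Finset.mem_erase]
          exact fun h => (Finset.mem_erase.1 hi).1 h.symm
        have := Finset.sum_erase_add (Finset.univ.erase i) (fun j => p i j) h0mem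
        have hb' := hb i (Finset.mem_erase.1 hi).1
        linear_combination this + hb'
      rw [Finset.sum_congr rfl hpt, Finset.sum_neg_distrib, keyE, neg_zero]
    calc ∑ j ∈ Finset.univ.erase (0 : Fin (n+1)), p 0 j
        = ∑ j ∈ Finset.univ.erase (0 : Fin (n+1)), p j 0 :=
          Finset.sum_congr rfl fun j _ => hsymm 0 j
      _ = 0 := hcol
  · exact hb i hi

-- step 2: derived relation
private lemma star_derived (n : ℕ) (p : Fin (n + 1) → Fin (n + 1) → ℂ)
    (hsymm : ∀ i j, p i j = p j i)
    (ha : ∀ i j k l : Fin (n + 1), i ≠ j → i ≠ k → i ≠ l → j ≠ k → j ≠ l → k ≠ l →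
      p i j * p k l = p i k * p j l)
    (hrow : ∀ i : Fin (n+1), ∑ j ∈ Finset.univ.erase i, p i j = 0) :
    ∀ i j k : Fin (n+1), i ≠ j → i ≠ k → j ≠ k → p i j * p k j = p i k * p j k := by
  intro i j k hij hik hjk
  -- E3 = univ \ {i,j,k}
  set E3 := ((Finset.univ.erase k).erase i).erase j with hE3
  have hsplit : ∀ a b c : Fin (n+1), a ≠ b → a ≠ c → b ≠ c → ∀ f : Fin (n+1) → ℂ,
      (∑ l ∈ ((Finset.univ.erase c).erase a).erase b, f l) + f b + f a
        = ∑ l ∈ Finset.univ.erase c, f l := by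
    intro a b c hab hac hbc f
    have h1 : a ∈ Finset.univ.erase c := by simp [hac]
    have h2 : b ∈ (Finset.univ.erase c).erase a := by simp [hbc, hab.symm]
    rw [Finset.sum_erase_add _ _ h2, Finset.sum_erase_add _ _ h1]
  -- multiply row k by p i j
  have hk : (∑ l ∈ E3, p i j * p k l) + p i j * p k j + p i j * p k i = 0 := by
    rw [hsplit i j k hij hik hjk (fun l => p i j * p k l)]
    rw [← Finset.mul_sum, hrow k, mul_zero]
  -- row j split
  have hj : (∑ l ∈ E3, p j l) + p j k + p j i = 0 := by
    have hE3' : ((Finset.univ.erase j).erase i).erase k = E3 := by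
      rw [hE3]; ext l; simp [Finset.mem_erase]; tauto
    rw [← hE3', hsplit i k j hik hij hjk.symm (fun l => p j l), hrow j]
  -- rewrite inner sum with ha
  have hsum : ∑ l ∈ E3, p i j * p k l = p i k * ∑ l ∈ E3, p j l := by
    rw [Finset.mul_sum]
    refine Finset.sum_congr rfl fun l hl => ?_
    rw [hE3, Finset.mem_erase, Finset.mem_erase, Finset.mem_erase] at hl
    exact ha i j k l hij hik (Ne.symm hl.2.1) hjk (Ne.symm hl.1) (Ne.symm hl.2.2.1)
  rw [hsum] at hk
  have h1 : p k i = p i k := hsymm k i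
  have h2 : p j i = p i j := hsymm j i
  linear_combination hk - p i k * hj - p i j * h1 + p i k * h2

private lemma star_main (n : ℕ) (p : Fin (n + 1) → Fin (n + 1) → ℂ)
    (hsymm : ∀ i j, p i j = p j i)
    (ha : ∀ i j k l : Fin (n + 1), i ≠ j → i ≠ k → i ≠ l → j ≠ k → j ≠ l → k ≠ l →
      p i j * p k l = p i k * p j l)
    (hrow : ∀ i : Fin (n+1), ∑ j ∈ Finset.univ.erase i, p i j = 0)
    (hD : ∀ i j k : Fin (n+1), i ≠ j → i ≠ k → j ≠ k → p i j * p k j = p i k * p j k) :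
    ∀ j k : Fin (n+1), j ≠ k → p j k = 0 := by
  have hsplit : ∀ a b c : Fin (n+1), a ≠ b → a ≠ c → b ≠ c → ∀ f : Fin (n+1) → ℂ,
      (∑ l ∈ ((Finset.univ.erase c).erase a).erase b, f l) + f b + f a
        = ∑ l ∈ Finset.univ.erase c, f l := by
    intro a b c hab hac hbc f
    have h1 : a ∈ Finset.univ.erase c := by simp [hac]
    have h2 : b ∈ (Finset.univ.erase c).erase a := by simp [hbc, hab.symm]
    rw [Finset.sum_erase_add _ _ h2, Finset.sum_erase_add _ _ h1]
  intro j k hjk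
  by_contra hc0
  set c := p j k with hcdef
  set E := (Finset.univ.erase j).erase k with hE
  have claim1 : ∀ i ∈ E, p i j = p i k := by
    intro i hi
    rw [hE, Finset.mem_erase, Finset.mem_erase] at hi
    obtain ⟨hik, hij, -⟩ := hi
    have hd := hD i j k hij hik hjk
    have h1 : p k j = p j k := hsymm k j
    have hz : (p i j - p i k) * c = 0 := by
      rw [hcdef]; linear_combination hd - p i j * h1
    rcases mul_eq_zero.1 hz with h | h
    · exact sub_eq_zero.1 h
    · exact absurd h hc0
  have claim2 : ∀ i ∈ E, ∀ l ∈ E, i ≠ l → c * p i l = p i j * p l j := by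
    intro i hi l hl hil
    rw [hE, Finset.mem_erase, Finset.mem_erase] at hi hl
    obtain ⟨hik, hij, -⟩ := hi
    obtain ⟨hlk, hlj, -⟩ := hl
    have h := ha j k i l hjk (Ne.symm hij) (Ne.symm hlj) (Ne.symm hik) (Ne.symm hlk) hil
    rw [hcdef, h, hsymm j i, hsymm k l, ← claim1 l (by simp [hE, hlk, hlj])]
  have claim3 : ∑ l ∈ E, p l j = -c := by
    have h0 : ∑ l ∈ Finset.univ.erase j, p l j = 0 := by
      rw [← hrow j]
      exact Finset.sum_congr rfl fun l _ => (hsymm j l).symm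
    have hkmem : k ∈ Finset.univ.erase j := by simp [hjk.symm]
    have := Finset.sum_erase_add (Finset.univ.erase j) (fun l => p l j) hkmem
    rw [← hE] at this
    have hkj : p k j = c := hsymm k j
    linear_combination this + h0 - hkj
  have claim4 : ∀ i ∈ E, p i j = 0 ∨ p i j = c := by
    intro i hi
    have hiE := hi
    rw [hE, Finset.mem_erase, Finset.mem_erase] at hi
    obtain ⟨hik, hij, -⟩ := hi
    have hs := hsplit j k i (hjk) (Ne.symm hij) (Ne.symm hik) (fun l => p i l)
    rw [hrow i] at hs
    have hset : ((Finset.univ.erase i).erase j).erase k = E.erase i := by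
      rw [hE]; ext l; simp [Finset.mem_erase]; tauto
    rw [hset] at hs
    -- hs : ∑ l ∈ E.erase i, p i l + p i k + p i j = 0
    have h2a : ∑ l ∈ E.erase i, c * p i l = c * (-2 * p i j) := by
      rw [← Finset.mul_sum]
      have : ∑ l ∈ E.erase i, p i l = -2 * p i j := by
        have hik' := claim1 i hiE
        linear_combination hs + hik'
      rw [this]
    have h2b : ∑ l ∈ E.erase i, c * p i l = p i j * (-c - p i j) := by
      have : ∀ l ∈ E.erase i, c * p i l = p i j * p l j := by
        intro l hl
        rw [Finset.mem_erase] at hl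
        exact claim2 i hiE l hl.2 (Ne.symm hl.1)
      rw [Finset.sum_congr rfl this, ← Finset.mul_sum]
      have := Finset.sum_erase_add E (fun l => p l j) hiE
      rw [claim3] at this
      have : ∑ l ∈ E.erase i, p l j = -c - p i j := by linear_combination this
      rw [this]
    have hz : p i j * (c - p i j) = 0 := by
      linear_combination h2a - h2b
    rcases mul_eq_zero.1 hz with h | h
    · exact Or.inl h
    · exact Or.inr (by linear_combination -h)
  -- final count
  set F := E.filter (fun l => p l j = c) with hF
  have hcount : ∑ l ∈ E, p l j = (F.card : ℂ) * c := by
    rw [← Finset.sum_filter_add_sum_filter_not E (fun l => p l j = c)]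
    have h1 : ∑ l ∈ F, p l j = (F.card : ℂ) * c := by
      rw [Finset.sum_congr rfl (fun l hl => (Finset.mem_filter.1 hl).2), Finset.sum_const,
        nsmul_eq_mul]
    have h2 : ∑ l ∈ E.filter (fun l => ¬p l j = c), p l j = 0 := by
      refine Finset.sum_eq_zero fun l hl => ?_
      rw [Finset.mem_filter] at hl
      rcases claim4 l hl.1 with h | h
      · exact h
      · exact absurd h hl.2
    rw [h2, add_zero, ← hF, h1]
  rw [claim3] at hcount
  have : ((F.card : ℂ) + 1) * c = 0 := by linear_combination -hcount
  rcases mul_eq_zero.1 this with h | h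
  · have : ((F.card + 1 : ℕ) : ℂ) = 0 := by push_cast; linear_combination h
    exact absurd this (Nat.cast_ne_zero.2 (Nat.succ_ne_zero _))
  · exact absurd h hc0

/-- Let `p_ij ∈ ℂ` be given for all 2-element subsets `{i,j}` of `{0,…,n}` (so `p` is
symmetric).  If (a) `p_ij p_kl = p_ik p_jl` for all pairwise distinct `i,j,k,l`,
(b) `∑_{j ≠ i} p_ij = 0` for every `i ∈ {1,…,n}`, and (c) `∑_{1 ≤ i < j ≤ n} p_ij = 0`,
then `p_ij = 0` for all `{i,j}`. -/
theorem statement12 (n : ℕ) (hn : 1 ≤ n) (p : Fin (n + 1) → Fin (n + 1) → ℂ)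
    (hsymm : ∀ i j, p i j = p j i)
    (ha : ∀ i j k l : Fin (n + 1), i ≠ j → i ≠ k → i ≠ l → j ≠ k → j ≠ l → k ≠ l →
      p i j * p k l = p i k * p j l)
    (hb : ∀ i : Fin (n + 1), i ≠ 0 → ∑ j ∈ Finset.univ.erase i, p i j = 0)
    (hc : ∑ q ∈ Finset.univ.filter
        (fun q : Fin (n + 1) × Fin (n + 1) => q.1 ≠ 0 ∧ q.1 < q.2), p q.1 q.2 = 0) :
    ∀ i j : Fin (n + 1), i ≠ j → p i j = 0 := by
  have hrow := star_row_zero n p hsymm hb hc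
  have hD := star_derived n p hsymm ha hrow
  exact star_main n p hsymm ha hrow hD
end

section
/- Let n ≥ 1 and let p_ij ∈ ℂ be given for all 2-element subsets {i,j} of {0,1,…,n} (so p_ji = p_ij). Assume: (a) p_ij·p_kl = p_ik·p_jl for all pairwise distinct i,j,k,l ∈ {0,…,n}; and (b) Σ_{j ∈ {0,…,n}, j ≠ i} p_ij = 0 for every i ∈ {1,…,n}. If i, j ∈ {1,…,n} are distinct and p_ij ≠ 0, then p_il = p_jl for every l ∈ {0,…,n} ∖ {i,j}. -/
/-- Let `p_ij ∈ ℂ` be given for all 2-element subsets `{i,j}` of `{0,…,n}` (so `p` is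
symmetric).  Assume (a) `p_ij p_kl = p_ik p_jl` for all pairwise distinct `i,j,k,l`, and
(b) `∑_{j ≠ i} p_ij = 0` for every `i ∈ {1,…,n}`.  If `i, j ∈ {1,…,n}` are distinct and
`p_ij ≠ 0`, then `p_il = p_jl` for every `l ∈ {0,…,n} ∖ {i,j}`. -/
theorem statement13 (n : ℕ) (hn : 1 ≤ n) (p : Fin (n + 1) → Fin (n + 1) → ℂ)
    (hsymm : ∀ i j, p i j = p j i)
    (ha : ∀ i j k l : Fin (n + 1), i ≠ j → i ≠ k → i ≠ l → j ≠ k → j ≠ l → k ≠ l →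
      p i j * p k l = p i k * p j l)
    (hb : ∀ i : Fin (n + 1), i ≠ 0 → ∑ j ∈ Finset.univ.erase i, p i j = 0)
    (i j : Fin (n + 1)) (hi : i ≠ 0) (hj : j ≠ 0) (hij : i ≠ j) (hp : p i j ≠ 0) :
    ∀ l : Fin (n + 1), l ≠ i → l ≠ j → p i l = p j l := by
  intro l hli hlj
  have hji : j ≠ i := hij.symm
  set T : Finset (Fin (n + 1)) := ((Finset.univ.erase i).erase j).erase l with hT
  have hjmem : j ∈ Finset.univ.erase i := Finset.mem_erase.2 ⟨hji, Finset.mem_univ _⟩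
  have hlmem : l ∈ (Finset.univ.erase i).erase j :=
    Finset.mem_erase.2 ⟨hlj, Finset.mem_erase.2 ⟨hli, Finset.mem_univ _⟩⟩
  have himem : i ∈ Finset.univ.erase j := Finset.mem_erase.2 ⟨hij, Finset.mem_univ _⟩
  have hlmem' : l ∈ (Finset.univ.erase j).erase i :=
    Finset.mem_erase.2 ⟨hli, Finset.mem_erase.2 ⟨hlj, Finset.mem_univ _⟩⟩
  have E1 : p i j + (p i l + ∑ m ∈ T, p i m) = 0 := by
    rw [hT, Finset.add_sum_erase _ _ hlmem, Finset.add_sum_erase _ _ hjmem]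
    exact hb i hi
  have hT' : T = ((Finset.univ.erase j).erase i).erase l := by
    rw [hT]; ext x; simp only [Finset.mem_erase, Finset.mem_univ, and_true]; tauto
  have E2 : p j i + (p j l + ∑ m ∈ T, p j m) = 0 := by
    rw [hT', Finset.add_sum_erase _ _ hlmem', Finset.add_sum_erase _ _ himem]
    exact hb j hj
  have E3 : (∑ m ∈ T, p i m) * p j l = p i l * ∑ m ∈ T, p j m := by
    rw [Finset.sum_mul, Finset.mul_sum]
    refine Finset.sum_congr rfl fun m hm => ?_
    rw [hT] at hm
    obtain ⟨hml, hmj, hmi, -⟩ :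
        m ≠ l ∧ m ≠ j ∧ m ≠ i ∧ m ∈ (Finset.univ : Finset (Fin (n+1))) := by
      simpa [Finset.mem_erase, and_assoc] using hm
    have := ha i l m j hli.symm hmi.symm hij hml.symm hlj hmj
    rw [hsymm m j, hsymm l j] at this
    exact this.symm
  have hpji : p j i = p i j := (hsymm i j).symm
  have key : p i j * p i l = p i j * p j l := by linear_combination E3 + p i l * E2 - p j l * E1 - p i l * hpji
  exact mul_left_cancel₀ hp key
end

section
/- Let n ≥ 1 and let p_ij ∈ ℂ be given for all 2-element subsets {i,j} of {0,1,…,n} (so p_ji = p_ij). Assume: (a) p_ij·p_kl = p_ik·p_jl for all pairwise distinct i,j,k,l ∈ {0,…,n}; and (b) Σ_{j ∈ {0,…,n}, j ≠ i} p_ij = 0 for every i ∈ {1,…,n}. If i, j, k ∈ {1,…,n} are pairwise distinct with p_ij ≠ 0 and p_jk ≠ 0, then p_ik ≠ 0 and p_ij = p_jk = p_ik. (In particular, the graph on {1,…,n} whose edges are the pairs {i,j} with p_ij ≠ 0 has complete graphs as connected components, on each of which the values p_ij share a common value.) -/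
/-- Let `p_ij ∈ ℂ` be given for all 2-element subsets `{i,j}` of `{0,…,n}` (so `p` is
symmetric).  Assume (a) `p_ij p_kl = p_ik p_jl` for all pairwise distinct `i,j,k,l`, and
(b) `∑_{j ≠ i} p_ij = 0` for every `i ∈ {1,…,n}`.  If `i, j, k ∈ {1,…,n}` are pairwise
distinct with `p_ij ≠ 0` and `p_jk ≠ 0`, then `p_ik ≠ 0` and `p_ij = p_jk = p_ik`.
(In particular, the graph on `{1,…,n}` whose edges are the pairs `{i,j}` with
`p_ij ≠ 0` has complete graphs as connected components, on each of which the values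
`p_ij` share a common value.) -/
theorem statement14 (n : ℕ) (hn : 1 ≤ n) (p : Fin (n + 1) → Fin (n + 1) → ℂ)
    (hsymm : ∀ i j, p i j = p j i)
    (ha : ∀ i j k l : Fin (n + 1), i ≠ j → i ≠ k → i ≠ l → j ≠ k → j ≠ l → k ≠ l →
      p i j * p k l = p i k * p j l)
    (hb : ∀ i : Fin (n + 1), i ≠ 0 → ∑ j ∈ Finset.univ.erase i, p i j = 0)
    (i j k : Fin (n + 1)) (hi : i ≠ 0) (hj : j ≠ 0) (hk : k ≠ 0)
    (hij : i ≠ j) (hik : i ≠ k) (hjk : j ≠ k)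
    (hpij : p i j ≠ 0) (hpjk : p j k ≠ 0) :
    p i k ≠ 0 ∧ p i j = p j k ∧ p j k = p i k := by
  classical
  set T : Finset (Fin (n + 1)) := ((Finset.univ.erase i).erase j).erase k with hTdef
  have hmemT : ∀ l, l ∈ T → l ≠ i ∧ l ≠ j ∧ l ≠ k := by
    intro l hl
    simp only [hTdef, Finset.mem_erase, Finset.mem_univ, and_true] at hl
    exact ⟨hl.2.2, hl.2.1, hl.1⟩
  have E1 : ∀ l ∈ T, p i j * p k l = p i k * p j l := by
    intro l hl
    obtain ⟨hli, hlj, hlk⟩ := hmemT l hl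
    exact ha i j k l hij hik (Ne.symm hli) hjk (Ne.symm hlj) (Ne.symm hlk)
  have E2 : ∀ l ∈ T, p i j * p k l = p j k * p i l := by
    intro l hl
    obtain ⟨hli, hlj, hlk⟩ := hmemT l hl
    have h := ha i j l k hij (Ne.symm hli) hik (Ne.symm hlj) hjk hlk
    rw [hsymm l k] at h
    linear_combination h
  -- row i decomposition
  have hjmem : j ∈ Finset.univ.erase i := by
    simp [Finset.mem_erase, Ne.symm hij]
  have hkmem : k ∈ (Finset.univ.erase i).erase j := by
    simp [Finset.mem_erase, Ne.symm hik, Ne.symm hjk]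
  have rowi : p i j + p i k + ∑ l ∈ T, p i l = 0 := by
    have h := hb i hi
    rw [← Finset.add_sum_erase _ _ hjmem, ← Finset.add_sum_erase _ _ hkmem] at h
    linear_combination h
  -- row j decomposition
  have himem : i ∈ Finset.univ.erase j := by
    simp [Finset.mem_erase, hij]
  have hkmem' : k ∈ (Finset.univ.erase j).erase i := by
    simp [Finset.mem_erase, Ne.symm hjk, Ne.symm hik]
  have hTj : ((Finset.univ.erase j).erase i).erase k = T := by
    ext l
    simp only [hTdef, Finset.mem_erase, Finset.mem_univ, and_true]
    tauto
  have rowj : p i j + p j k + ∑ l ∈ T, p j l = 0 := by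
    have h := hb j hj
    rw [← Finset.add_sum_erase _ _ himem, ← Finset.add_sum_erase _ _ hkmem', hTj] at h
    rw [← hsymm i j] at h
    linear_combination h
  -- row k decomposition
  have himem' : i ∈ Finset.univ.erase k := by
    simp [Finset.mem_erase, hik]
  have hjmem' : j ∈ (Finset.univ.erase k).erase i := by
    simp [Finset.mem_erase, hjk, Ne.symm hij]
  have hTk : ((Finset.univ.erase k).erase i).erase j = T := by
    ext l
    simp only [hTdef, Finset.mem_erase, Finset.mem_univ, and_true]
    tauto
  have rowk : p i k + p j k + ∑ l ∈ T, p k l = 0 := by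
    have h := hb k hk
    rw [← Finset.add_sum_erase _ _ himem', ← Finset.add_sum_erase _ _ hjmem', hTk] at h
    rw [← hsymm i k, ← hsymm j k] at h
    linear_combination h
  -- step 1: p i k ≠ 0
  have hpik : p i k ≠ 0 := by
    intro h0
    have hz : ∀ l ∈ T, p k l = 0 := by
      intro l hl
      have h := E1 l hl
      rw [h0, zero_mul] at h
      exact (mul_eq_zero.mp h).resolve_left hpij
    have hS : ∑ l ∈ T, p k l = 0 := Finset.sum_eq_zero hz
    rw [h0, hS] at rowk
    apply hpjk
    linear_combination rowk
  -- step 2: summed relations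
  have S1 : p i j * ∑ l ∈ T, p k l = p i k * ∑ l ∈ T, p j l := by
    rw [Finset.mul_sum, Finset.mul_sum]
    exact Finset.sum_congr rfl E1
  have S2 : p i j * ∑ l ∈ T, p k l = p j k * ∑ l ∈ T, p i l := by
    rw [Finset.mul_sum, Finset.mul_sum]
    exact Finset.sum_congr rfl E2
  have hca : p i j = p j k := by
    have h : p i k * p i j = p i k * p j k := by
      linear_combination p i j * rowk - p j k * rowi - S2
    exact mul_left_cancel₀ hpik h
  have hcb : p i j = p i k := by
    have h : p j k * p i j = p j k * p i k := by
      linear_combination p i j * rowk - p i k * rowj - S1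
    exact mul_left_cancel₀ hpjk h
  exact ⟨hpik, hca, hca ▸ hcb⟩
end
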